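/- arXiv:1304.6514 — 2 statements merged into one kernel-verified Lean document; each statement's English description precedes it below -/
import Mathlib

section
/- Let N ≥ 1 and let K ≥ 1. For j = 1, …, N let g_j : ℝ → ℝ (the exact slice propagators), g̃_j : ℝ → ℝ (the time-discretized slice propagators), and φ_j : ℝ → ℝ (the interpolated approximate propagators) be given, and assume each g_j is K-Lipschitz. Define sequences λ*_0 = λ_0 ∈ ℝ, λ*_j = g_j(λ*_{j-1}) and λ_j = φ_j(λ_{j-1}) for j = 1, …, N. Then the final error satisfies |λ_N − λ*_N| ≤ N · K^{N−1} · ( max_{1≤j≤N} |φ_j(λ_{j-1}) − g̃_j(λ_{j-1})| + max_{1≤j≤N} |g̃_j(λ_{j-1}) − g_j(λ_{j-1})| ). -/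
/-!
On slice `j` compare `φⱼ` with `g̃ⱼ` and `g̃ⱼ` with `gⱼ` at the computed value `λⱼ₋₁`, then move from
`λⱼ₋₁` to `λ*ⱼ₋₁` by the Lipschitz bound of `gⱼ`. So the error `eⱼ = |λⱼ - λ*ⱼ|` satisfies
`eⱼ ≤ c + K eⱼ₋₁` with `c` the sum of the two maximal slice errors, and since `e₀ = 0` and `K ≥ 1`
this linear recurrence gives `eₙ ≤ n Kⁿ⁻¹ c`.
-/

theorem le_nat_mul_pow_pred_mul_of_le_add_mul {e : ℕ → ℝ} {K c : ℝ} {N : ℕ}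
    (hK : 1 ≤ K) (hc : 0 ≤ c) (he0 : e 0 ≤ 0) (hstep : ∀ n < N, e (n + 1) ≤ c + K * e n) :
    e N ≤ N * K ^ (N - 1) * c := by
  have hK0 : 0 ≤ K := zero_le_one.trans hK
  suffices ∀ n ≤ N, e n ≤ n * K ^ (n - 1) * c from this N le_rfl
  intro n
  induction n with
  | zero => simpa using he0
  | succ m ih =>
    intro hm
    have hprev : K * e m ≤ m * K ^ m * c := by
      rcases Nat.eq_zero_or_pos m with rfl | hpos
      · simpa using mul_nonpos_of_nonneg_of_nonpos hK0 he0
      · calc K * e m ≤ K * (m * K ^ (m - 1) * c) :=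
            mul_le_mul_of_nonneg_left (ih (Nat.le_of_succ_le hm)) hK0
          _ = m * K ^ m * c := by
            rw [← mul_pow_sub_one hpos.ne' K]; ring
    calc e (m + 1) ≤ c + K * e m := hstep m hm
      _ ≤ c * K ^ m + m * K ^ m * c :=
        add_le_add (le_mul_of_one_le_right hc (one_le_pow₀ hK)) hprev
      _ = ((m + 1 : ℕ) : ℝ) * K ^ (m + 1 - 1) * c := by push_cast; ring_nf

/-- Composite error bound for the Nievergelt time-parallel method:
with `N` time slices, exact slice propagators `g j`, time-discretized
propagators `gd j`, interpolated propagators `φ j`, each `g j` being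
`K`-Lipschitz with `K ≥ 1`, the final error is bounded by
`N * K^(N-1)` times the sum of the maximal per-slice interpolation
error and maximal per-slice time-discretization error. -/
theorem nievergelt_composite_error_bound
    (N : ℕ) (hN : 1 ≤ N) (K : ℝ) (hK : 1 ≤ K)
    (g gd φ : ℕ → ℝ → ℝ)
    (hLip : ∀ j ∈ Finset.Icc 1 N, ∀ x y : ℝ, |g j x - g j y| ≤ K * |x - y|)
    (lam0 : ℝ) (lamStar lam : ℕ → ℝ)
    (hStar0 : lamStar 0 = lam0) (hLam0 : lam 0 = lam0)
    (hStar : ∀ j ∈ Finset.Icc 1 N, lamStar j = g j (lamStar (j - 1)))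
    (hLam : ∀ j ∈ Finset.Icc 1 N, lam j = φ j (lam (j - 1))) :
    |lam N - lamStar N| ≤
      (N : ℝ) * K ^ (N - 1) *
        ((Finset.Icc 1 N).sup' (Finset.nonempty_Icc.mpr hN)
            (fun j => |φ j (lam (j - 1)) - gd j (lam (j - 1))|) +
         (Finset.Icc 1 N).sup' (Finset.nonempty_Icc.mpr hN)
            (fun j => |gd j (lam (j - 1)) - g j (lam (j - 1))|)) := by
  set interp := fun j => |φ j (lam (j - 1)) - gd j (lam (j - 1))|
  set discr := fun j => |gd j (lam (j - 1)) - g j (lam (j - 1))|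
  have hmem : ∀ n < N, n + 1 ∈ Finset.Icc 1 N := fun n hn =>
    Finset.mem_Icc.mpr ⟨Nat.le_add_left 1 n, hn⟩
  have hsup_nonneg : 0 ≤ (Finset.Icc 1 N).sup' _ interp + (Finset.Icc 1 N).sup' _ discr :=
    add_nonneg ((abs_nonneg _).trans (Finset.le_sup' interp (hmem 0 hN)))
      ((abs_nonneg _).trans (Finset.le_sup' discr (hmem 0 hN)))
  refine le_nat_mul_pow_pred_mul_of_le_add_mul (e := fun n => |lam n - lamStar n|) hK
    hsup_nonneg (by simp [hStar0, hLam0]) fun n hn => ?_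
  rw [hLam _ (hmem n hn), hStar _ (hmem n hn), Nat.add_sub_cancel]
  calc |φ (n + 1) (lam n) - g (n + 1) (lamStar n)|
      ≤ interp (n + 1) + discr (n + 1) + |g (n + 1) (lam n) - g (n + 1) (lamStar n)| := by
        simpa only [interp, discr, Nat.add_sub_cancel, Real.dist_eq] using
          dist_triangle4 (φ (n + 1) (lam n)) (gd (n + 1) (lam n)) (g (n + 1) (lam n)) _
    _ ≤ _ := add_le_add (add_le_add (Finset.le_sup' interp (hmem n hn))
        (Finset.le_sup' discr (hmem n hn))) (hLip _ (hmem n hn) _ _)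
end

section
/- Let N ≥ 1, K ≥ 1, C₁ ≥ 0, C₂ ≥ 0, and ε_t ≥ 0, ε_ξ ≥ 0. For j = 1, …, N let g_j, g̃_j, φ_j : ℝ → ℝ with each g_j K-Lipschitz, and suppose the per-slice time-discretization error bound |g̃_j(x) − g_j(x)| ≤ C₁ ε_t / N and the per-slice interpolation error bound |φ_j(x) − g̃_j(x)| ≤ C₂ ε_ξ / N hold for all x ∈ ℝ and all j. Define λ*_0 = λ_0 ∈ ℝ, λ*_j = g_j(λ*_{j-1}), λ_j = φ_j(λ_{j-1}). Then |λ_N − λ*_N| ≤ K^{N−1} (C₂ ε_ξ + C₁ ε_t). In particular, taking ε_t = Δt^k and ε_ξ = Δξ^ℓ, the Nievergelt method attains the combined interpolation and time-discretization accuracy O(Δξ^ℓ) + O(Δt^k). -/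
/-- Main error theorem for the Nievergelt time-parallel method: with `N`
time slices, exact `K`-Lipschitz slice propagators `g j`, time-discretized
propagators `gd j` satisfying the per-slice bound `|gd j x - g j x| ≤ C₁ εt / N`
(with `εt = Δt ^ k`), and interpolated propagators `φ j` satisfying the per-slice
bound `|φ j x - gd j x| ≤ C₂ εξ / N` (with `εξ = Δξ ^ ℓ`), the final error is
bounded by `K^(N-1) * (C₂ εξ + C₁ εt)`, i.e. the Nievergelt method attains the
combined accuracy `O(Δξ ^ ℓ) + O(Δt ^ k)`. -/
theorem nievergelt_main_error_bound
    (N : ℕ) (hN : 1 ≤ N) (K C₁ C₂ εt εξ : ℝ)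
    (hK : 1 ≤ K) (hC₁ : 0 ≤ C₁) (hC₂ : 0 ≤ C₂) (hεt : 0 ≤ εt) (hεξ : 0 ≤ εξ)
    (g gd φ : ℕ → ℝ → ℝ)
    (hLip : ∀ j ∈ Finset.Icc 1 N, ∀ x y : ℝ, |g j x - g j y| ≤ K * |x - y|)
    (hTime : ∀ j ∈ Finset.Icc 1 N, ∀ x : ℝ, |gd j x - g j x| ≤ C₁ * εt / N)
    (hInterp : ∀ j ∈ Finset.Icc 1 N, ∀ x : ℝ, |φ j x - gd j x| ≤ C₂ * εξ / N)
    (lam0 : ℝ) (lamStar lam : ℕ → ℝ)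
    (hStar0 : lamStar 0 = lam0) (hLam0 : lam 0 = lam0)
    (hStar : ∀ j ∈ Finset.Icc 1 N, lamStar j = g j (lamStar (j - 1)))
    (hLam : ∀ j ∈ Finset.Icc 1 N, lam j = φ j (lam (j - 1))) :
    |lam N - lamStar N| ≤ K ^ (N - 1) * (C₂ * εξ + C₁ * εt) := by
  set E : ℝ := C₂ * εξ + C₁ * εt with hE
  have hE0 : 0 ≤ E := by positivity
  have hK0 : (0:ℝ) ≤ K := le_trans zero_le_one hK
  have hNpos : (0:ℝ) < (N:ℝ) := by exact_mod_cast hN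
  -- one-step estimate
  have step : ∀ j ∈ Finset.Icc 1 N,
      |lam j - lamStar j| ≤ K * |lam (j-1) - lamStar (j-1)| + E / N := by
    intro j hj
    have h1 := hInterp j hj (lam (j-1))
    have h2 := hTime j hj (lam (j-1))
    have h3 := hLip j hj (lam (j-1)) (lamStar (j-1))
    rw [hLam j hj, hStar j hj]
    have key : φ j (lam (j-1)) - g j (lamStar (j-1)) =
        (φ j (lam (j-1)) - gd j (lam (j-1))) + (gd j (lam (j-1)) - g j (lam (j-1)))
        + (g j (lam (j-1)) - g j (lamStar (j-1))) := by ring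
    calc |φ j (lam (j-1)) - g j (lamStar (j-1))|
        ≤ |φ j (lam (j-1)) - gd j (lam (j-1))| + |gd j (lam (j-1)) - g j (lam (j-1))|
          + |g j (lam (j-1)) - g j (lamStar (j-1))| := by
            rw [key]; exact (abs_add_three _ _ _)
      _ ≤ C₂ * εξ / N + C₁ * εt / N + K * |lam (j-1) - lamStar (j-1)| :=
            add_le_add (add_le_add h1 h2) h3
      _ = K * |lam (j-1) - lamStar (j-1)| + E / N := by rw [hE]; ring
  -- induction: |lam j - lamStar j| ≤ j * K^(j-1) * E / N for 1 ≤ j ≤ N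
  have main : ∀ j, 1 ≤ j → j ≤ N →
      |lam j - lamStar j| ≤ (j:ℝ) * K ^ (j-1) * E / N := by
    intro j h1 h2
    induction j, h1 using Nat.le_induction with
    | base =>
        have := step 1 (by simp [hN])
        simpa [hLam0, hStar0] using this
    | succ n hn ih =>
        have hnN : n ≤ N := le_trans (Nat.le_succ n) h2
        have ihh := ih hnN
        have hs := step (n+1) (by simp [h2])
        simp only [Nat.add_sub_cancel] at hs
        have hKpow : (1:ℝ) ≤ K ^ n := one_le_pow₀ hK
        calc |lam (n+1) - lamStar (n+1)|
            ≤ K * |lam n - lamStar n| + E / N := hs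
          _ ≤ K * ((n:ℝ) * K ^ (n-1) * E / N) + E / N := by
              have := mul_le_mul_of_nonneg_left ihh hK0
              linarith
          _ ≤ ((n+1:ℕ):ℝ) * K ^ n * E / N := by
              have hpow : K * K ^ (n-1) = K ^ n := by
                rw [← pow_succ']; congr 1; omega
              have h1' : K * ((n:ℝ) * K ^ (n-1) * E / N) = (n:ℝ) * K ^ n * E / N := by
                rw [← hpow]; ring
              have hEN : (0:ℝ) ≤ E / N := div_nonneg hE0 hNpos.le
              have h2' : E / N ≤ K ^ n * E / N := by
                rw [mul_div_assoc]
                exact le_mul_of_one_le_left hEN hKpow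
              push_cast
              have heq : ((n:ℝ)+1) * K ^ n * E / N = (n:ℝ) * K ^ n * E / N + K ^ n * E / N := by
                ring
              rw [heq]
              linarith
  have := main N hN le_rfl
  calc |lam N - lamStar N| ≤ (N:ℝ) * K ^ (N-1) * E / N := this
    _ = K ^ (N-1) * E := by field_simp
end
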